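/- (Csiszár.) Let X be an ℝ^d-valued random vector with probability density f satisfying Rényi's condition, and suppose f·log₂(1/f) is Lebesgue integrable. Then lim_{h→0⁺} ( 𝔈_{𝒜*_h}(X) − d·log₂(1/h) ) = 𝔈(f). -/

import Mathlib

/-!
Write `gridAvg f h` for the function equal on every cell of `𝒜*_h` to the average of `f` over
that cell. For `0 < h ≤ 1` the partition entropy minus `d log(1/h)` is, in nats, exactly
`∫ negMulLog (gridAvg f h)`, so it suffices to show that this tends to `∫ negMulLog f`.
By Lebesgue's differentiation theorem `gridAvg f h → f` almost everywhere. Split `negMulLog` into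
its positive and negative parts. The negative part is convex, so Jensen's inequality gives
`∫ (negMulLog (gridAvg f h))⁻ ≤ ∫ (negMulLog f)⁻`, and Fatou's lemma gives the reverse
inequality in the limit. The positive part is at most `1`, so dominated convergence applies on
bounded sets. Outside them, Rényi's condition gives a tail bound that is uniform in `h`: the
`h`-cells inside a fixed block of `2 ^ d` unit cells of total mass `Q` contribute at most
`negMulLog Q + c_d Q`, by Jensen's inequality for the concave `negMulLog`.
-/

open MeasureTheory

/-- The entropy summand `t ↦ t·log₂(1/t)` (equal to `0` at `t = 0`). -/
noncomputable def entTerm (t : ℝ) : ℝ := t * Real.logb 2 (1 / t)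

/-- The cell of the cubic partition `𝒜*_h` of `ℝ^d` indexed by `i ∈ ℤ^d`,
namely `∏_j [i_j h, (i_j + 1) h)`. -/
def cubicCell {d : ℕ} (h : ℝ) (i : Fin d → ℤ) : Set (Fin d → ℝ) :=
  {x | ∀ j, x j ∈ Set.Ico ((i j : ℝ) * h) (((i j : ℝ) + 1) * h)}

open Real Set Filter Topology
open scoped ENNReal

namespace Real

lemma negMulLog_sum_le {ι : Type*} (s : Finset ι) {a : ι → ℝ} (ha : ∀ i ∈ s, 0 ≤ a i) :
    negMulLog (∑ i ∈ s, a i) ≤ ∑ i ∈ s, negMulLog (a i) := by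
  rw [negMulLog, neg_mul, Finset.sum_mul, ← Finset.sum_neg_distrib]
  refine Finset.sum_le_sum fun i hi => ?_
  rcases (ha i hi).eq_or_lt with h0 | h0
  · simp [negMulLog, ← h0]
  · have hlog := log_le_log h0 (Finset.single_le_sum ha hi)
    rw [negMulLog]
    nlinarith

lemma monotoneOn_negMulLog : MonotoneOn negMulLog (Icc 0 (exp (-1))) := by
  refine monotoneOn_of_deriv_nonneg (convex_Icc _ _) continuous_negMulLog.continuousOn
    (fun x hx => ?_) fun x hx => ?_
  · rw [interior_Icc] at hx
    exact (differentiableAt_negMulLog_iff.2 hx.1.ne').differentiableWithinAt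
  · rw [interior_Icc] at hx
    rw [deriv_negMulLog hx.1.ne']
    have hlog : log x ≤ -1 := by simpa using log_le_log hx.1 hx.2.le
    linarith

lemma mul_negMulLog_div {m : ℝ} (a : ℝ) (hm : m ≠ 0) :
    m * negMulLog (a / m) = negMulLog a + a * log m := by
  rw [div_eq_mul_inv, negMulLog_mul, negMulLog_def]
  simp only [log_inv]
  field_simp

lemma sum_mul_negMulLog_le {ι : Type*} (s : Finset ι) {w x : ι → ℝ}
    (hw : ∀ i ∈ s, 0 ≤ w i) (hx : ∀ i ∈ s, 0 ≤ x i) :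
    ∑ i ∈ s, w i * negMulLog (x i) ≤
      negMulLog (∑ i ∈ s, w i * x i) + (∑ i ∈ s, w i * x i) * log (∑ i ∈ s, w i) := by
  set W := ∑ i ∈ s, w i
  rcases (Finset.sum_nonneg hw).eq_or_lt with hW | hW
  · have hw0 : ∀ i ∈ s, w i = 0 := (Finset.sum_eq_zero_iff_of_nonneg hw).1 hW.symm
    have h1 : ∑ i ∈ s, w i * negMulLog (x i) = 0 :=
      Finset.sum_eq_zero fun i hi => by rw [hw0 i hi, zero_mul]
    have h2 : ∑ i ∈ s, w i * x i = 0 :=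
      Finset.sum_eq_zero fun i hi => by rw [hw0 i hi, zero_mul]
    simp [h1, h2]
  have jensen := concaveOn_negMulLog.le_map_sum (t := s) (w := fun i => w i / W) (p := x)
    (fun i hi => div_nonneg (hw i hi) hW.le) (by rw [← Finset.sum_div, div_self hW.ne'])
    (fun i hi => hx i hi)
  simp only [smul_eq_mul, div_mul_eq_mul_div, ← Finset.sum_div] at jensen
  calc ∑ i ∈ s, w i * negMulLog (x i)
      ≤ W * negMulLog ((∑ i ∈ s, w i * x i) / W) := by
        rwa [div_le_iff₀' hW] at jensen
    _ = _ := mul_negMulLog_div _ hW.ne'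

lemma posPart_negMulLog_eq {t : ℝ} (ht : 0 ≤ t) : (negMulLog t)⁺ = negMulLog (min t 1) := by
  rcases le_total t 1 with h | h
  · rw [min_eq_left h, posPart_eq_self]
    exact negMulLog_nonneg ht h
  · rw [min_eq_right h, negMulLog_one, posPart_eq_zero, negMulLog, neg_mul, neg_nonpos]
    exact mul_nonneg (by linarith) (log_nonneg h)

lemma posPart_negMulLog_le_one {t : ℝ} (ht : 0 ≤ t) : (negMulLog t)⁺ ≤ 1 :=
  max_le ((negMulLog_le_one_sub_self ht).trans (by linarith)) zero_le_one

lemma convexOn_negPart_negMulLog : ConvexOn ℝ (Ici 0) fun t => (negMulLog t)⁻ := by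
  have hmax : ConvexOn ℝ (Ici 0) fun t : ℝ => max (t * log t) 0 :=
    convexOn_mul_log.sup (convexOn_const 0 (convex_Ici 0))
  exact hmax.congr fun t _ => by simp [negPart_def, negMulLog]

lemma sum_mul_posPart_negMulLog_div_le {ι : Type*} (s : Finset ι) {p : ι → ℝ} {v Q M : ℝ}
    (hv : 0 < v) (hp : ∀ i ∈ s, 0 ≤ p i) (hpQ : ∑ i ∈ s, p i ≤ Q) (hQ : Q ≤ 1)
    (hM : 1 ≤ M) (hcard : s.card * v ≤ M) :
    ∑ i ∈ s, v * (negMulLog (p i / v))⁺ ≤ negMulLog Q + (log M + exp 1 * M) * Q := by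
  have hQ0 : 0 ≤ Q := (Finset.sum_nonneg hp).trans hpQ
  have hlogM : 0 ≤ log M := log_nonneg hM
  rcases le_or_gt Q (exp (-1)) with hQe | hQe
  · set x := fun i => min (p i / v) 1
    have hx : ∀ i ∈ s, 0 ≤ x i := fun i hi => le_min (div_nonneg (hp i hi) hv.le) zero_le_one
    have hvx : ∀ i ∈ s, v * x i ≤ p i := fun i hi =>
      (mul_le_mul_of_nonneg_left (min_le_left _ _) hv.le).trans_eq (mul_div_cancel₀ _ hv.ne')
    set m := ∑ i ∈ s, v * x i
    have hm0 : 0 ≤ m := Finset.sum_nonneg fun i hi => mul_nonneg hv.le (hx i hi)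
    have hmQ : m ≤ Q := (Finset.sum_le_sum hvx).trans hpQ
    have hlog : m * log (∑ _i ∈ s, v) ≤ Q * log M := by
      rw [Finset.sum_const, nsmul_eq_mul]
      rcases (Nat.cast_nonneg (α := ℝ) s.card).eq_or_lt with hs | hs
      · rw [← hs, zero_mul, log_zero, mul_zero]
        positivity
      · exact (mul_le_mul_of_nonneg_left (log_le_log (by positivity) hcard) hm0).trans
          (mul_le_mul_of_nonneg_right hmQ hlogM)
    calc ∑ i ∈ s, v * (negMulLog (p i / v))⁺
        = ∑ i ∈ s, v * negMulLog (x i) := Finset.sum_congr rfl fun i hi => by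
          rw [posPart_negMulLog_eq (div_nonneg (hp i hi) hv.le)]
      _ ≤ negMulLog m + m * log (∑ _i ∈ s, v) :=
          sum_mul_negMulLog_le s (fun _ _ => hv.le) hx
      _ ≤ negMulLog Q + Q * log M := add_le_add
          (monotoneOn_negMulLog ⟨hm0, hmQ.trans hQe⟩ ⟨hQ0, hQe⟩ hmQ) hlog
      _ ≤ negMulLog Q + (log M + exp 1 * M) * Q := by
          nlinarith [mul_nonneg (mul_nonneg (exp_pos 1).le (zero_le_one.trans hM)) hQ0]
  · have hexp : exp 1 * exp (-1) = 1 := by rw [← exp_add]; norm_num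
    calc ∑ i ∈ s, v * (negMulLog (p i / v))⁺
        ≤ ∑ _i ∈ s, v := Finset.sum_le_sum fun i hi =>
          mul_le_of_le_one_right hv.le (posPart_negMulLog_le_one (div_nonneg (hp i hi) hv.le))
      _ ≤ M := by rwa [Finset.sum_const, nsmul_eq_mul]
      _ = exp 1 * M * exp (-1) := by rw [mul_right_comm, hexp, one_mul]
      _ ≤ exp 1 * M * Q := by gcongr
      _ ≤ negMulLog Q + (log M + exp 1 * M) * Q := by
          nlinarith [negMulLog_nonneg hQ0 hQ]

end Real

lemma entTerm_eq_negMulLog_div (t : ℝ) : entTerm t = negMulLog t / log 2 := by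
  rw [entTerm, logb, one_div, log_inv, negMulLog]
  ring

section Integral

variable {α ι : Type*} [MeasurableSpace α] {μ : Measure α} {l : Filter ι}
  [l.IsCountablyGenerated] {F : ι → α → ℝ} {g : α → ℝ}

lemma tendsto_integral_of_ae_tendsto_of_eventually_integral_le (hF_nonneg : ∀ i x, 0 ≤ F i x)
    (hF_meas : ∀ i, AEMeasurable (F i) μ) (hF_int : ∀ᶠ i in l, Integrable (F i) μ)
    (hg : Integrable g μ) (hlim : ∀ᵐ x ∂μ, Tendsto (fun i => F i x) l (𝓝 (g x)))
    (hle : ∀ ε > 0, ∀ᶠ i in l, ∫ x, F i x ∂μ ≤ ∫ x, g x ∂μ + ε) :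
    Tendsto (fun i => ∫ x, F i x ∂μ) l (𝓝 (∫ x, g x ∂μ)) := by
  rcases l.eq_or_neBot with rfl | hl
  · exact tendsto_bot
  have hg0 : 0 ≤ᵐ[μ] g := hlim.mono fun x hx => ge_of_tendsto' hx fun i => hF_nonneg i x
  have fatou : ENNReal.ofReal (∫ x, g x ∂μ) ≤
      liminf (fun i => ENNReal.ofReal (∫ x, F i x ∂μ)) l := calc
    ENNReal.ofReal (∫ x, g x ∂μ)
        = ∫⁻ x, liminf (fun i => ENNReal.ofReal (F i x)) l ∂μ := by
      rw [ofReal_integral_eq_lintegral_ofReal hg hg0]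
      exact lintegral_congr_ae (hlim.mono fun x hx =>
        ((ENNReal.continuous_ofReal.tendsto _).comp hx).liminf_eq.symm)
    _ ≤ liminf (fun i => ∫⁻ x, ENNReal.ofReal (F i x) ∂μ) l :=
      lintegral_liminf_le' fun i => (hF_meas i).ennreal_ofReal
    _ = liminf (fun i => ENNReal.ofReal (∫ x, F i x ∂μ)) l := liminf_congr (hF_int.mono
      fun i hi => (ofReal_integral_eq_lintegral_ofReal hi (ae_of_all _ (hF_nonneg i))).symm)
  refine tendsto_order.2 ⟨fun a ha => ?_, fun a ha => ?_⟩
  · rcases lt_or_ge a 0 with ha0 | ha0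
    · exact Eventually.of_forall fun i =>
        ha0.trans_le (integral_nonneg (hF_nonneg i))
    · filter_upwards [eventually_lt_of_lt_liminf
        (((ENNReal.ofReal_lt_ofReal_iff_of_nonneg ha0).2 ha).trans_le fatou)] with i hi
      exact (ENNReal.ofReal_lt_ofReal_iff_of_nonneg ha0).1 hi
  · filter_upwards [hle _ (half_pos (sub_pos.2 ha))] with i hi
    linarith

lemma integral_eq_integral_posPart_sub_integral_negPart (hg : Integrable g μ) :
    ∫ x, g x ∂μ = (∫ x, (g x)⁺ ∂μ) - ∫ x, (g x)⁻ ∂μ := by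
  have hp : Integrable (fun x => (g x)⁺) μ := hg.pos_part
  have hm : Integrable (fun x => (g x)⁻) μ := hg.neg_part
  simp only [← integral_sub hp hm, posPart_sub_negPart]

lemma toReal_measure_preimage_eq_setIntegral {Ω : Type*} [MeasurableSpace Ω] {P : Measure Ω}
    {X : Ω → α} (hX : Measurable X) (hg_meas : AEStronglyMeasurable g μ)
    (hg_nonneg : ∀ x, 0 ≤ g x) (hdensity : P.map X = μ.withDensity fun x => ENNReal.ofReal (g x))
    {A : Set α} (hA : MeasurableSet A) : (P (X ⁻¹' A)).toReal = ∫ x in A, g x ∂μ := by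
  rw [← Measure.map_apply hX hA, hdensity, withDensity_apply _ hA,
    integral_eq_lintegral_of_nonneg_ae (ae_of_all _ hg_nonneg) hg_meas.restrict]

end Integral

section CubicCells

variable {d : ℕ}

lemma cubicCell_eq_pi (h : ℝ) (i : Fin d → ℤ) :
    cubicCell h i = pi univ fun j => Ico ((i j : ℝ) * h) ((i j + 1) * h) := by
  ext x
  simp [cubicCell]

lemma measurableSet_cubicCell (h : ℝ) (i : Fin d → ℤ) : MeasurableSet (cubicCell h i) := by
  rw [cubicCell_eq_pi]
  exact .univ_pi fun _ => measurableSet_Ico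

lemma volume_cubicCell (h : ℝ) (i : Fin d → ℤ) :
    volume (cubicCell h i) = ENNReal.ofReal h ^ d := by
  simp [cubicCell_eq_pi, volume_pi_pi, Real.volume_Ico, add_mul]

lemma measureReal_cubicCell {h : ℝ} (hh : 0 ≤ h) (i : Fin d → ℤ) :
    volume.real (cubicCell h i) = h ^ d := by
  simp [measureReal_def, volume_cubicCell, ENNReal.toReal_ofReal hh]

noncomputable def cellIndex (h : ℝ) (x : Fin d → ℝ) : Fin d → ℤ := fun j => ⌊x j / h⌋

lemma mem_cubicCell_iff {h : ℝ} (hh : 0 < h) {x : Fin d → ℝ} {i : Fin d → ℤ} :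
    x ∈ cubicCell h i ↔ cellIndex h x = i := by
  simp only [cubicCell, mem_ofPred_eq, mem_Ico, funext_iff, cellIndex, Int.floor_eq_iff,
    le_div_iff₀ hh, div_lt_iff₀ hh]

lemma mem_cubicCell_cellIndex {h : ℝ} (hh : 0 < h) (x : Fin d → ℝ) :
    x ∈ cubicCell h (cellIndex h x) :=
  (mem_cubicCell_iff hh).2 rfl

lemma measurable_cellIndex (h : ℝ) : Measurable (cellIndex (d := d) h) :=
  measurable_pi_lambda _ fun _ => by unfold cellIndex; fun_prop

lemma pairwise_disjoint_cubicCell {h : ℝ} (hh : 0 < h) :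
    Pairwise (Function.onFun Disjoint (cubicCell (d := d) h)) := fun _ _ hij =>
  Set.disjoint_left.2 fun _ hi hj =>
    hij (((mem_cubicCell_iff hh).1 hi).symm.trans ((mem_cubicCell_iff hh).1 hj))

lemma iUnion_cubicCell {h : ℝ} (hh : 0 < h) : ⋃ i, cubicCell (d := d) h i = univ :=
  eq_univ_of_forall fun x => mem_iUnion.2 ⟨_, mem_cubicCell_cellIndex hh x⟩

lemma lintegral_comp_cellIndex {h : ℝ} (hh : 0 < h) (F : (Fin d → ℤ) → ℝ≥0∞) :
    ∫⁻ x, F (cellIndex h x) = ∑' i, F i * ENNReal.ofReal h ^ d := by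
  rw [← setLIntegral_univ, ← iUnion_cubicCell hh,
    lintegral_iUnion (measurableSet_cubicCell h) (pairwise_disjoint_cubicCell hh)]
  refine tsum_congr fun i => ?_
  rw [setLIntegral_congr_fun (measurableSet_cubicCell h i)
    (fun x hx => by rw [(mem_cubicCell_iff hh).1 hx]), setLIntegral_const, volume_cubicCell]

lemma integrable_comp_cellIndex {h : ℝ} (hh : 0 < h) {F : (Fin d → ℤ) → ℝ}
    (hF : Summable F) : Integrable fun x => F (cellIndex h x) := by
  refine ⟨(measurable_of_countable F).comp (measurable_cellIndex h) |>.aestronglyMeasurable, ?_⟩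
  rw [HasFiniteIntegral, lintegral_comp_cellIndex hh fun i => ‖F i‖ₑ, ENNReal.tsum_mul_right]
  exact ENNReal.mul_lt_top (tsum_enorm_ne_top_iff_summable_norm.2 hF.norm).lt_top (by simp)

lemma hasSum_integral_cubicCell {h : ℝ} (hh : 0 < h) {g : (Fin d → ℝ) → ℝ}
    (hg : Integrable g) : HasSum (fun i => ∫ x in cubicCell h i, g x) (∫ x, g x) := by
  simpa [iUnion_cubicCell hh] using hasSum_integral_iUnion (measurableSet_cubicCell h)
    (pairwise_disjoint_cubicCell hh) (by rw [iUnion_cubicCell hh]; exact hg.integrableOn)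

lemma hasSum_integral_comp_cellIndex {h : ℝ} (hh : 0 < h) {F : (Fin d → ℤ) → ℝ}
    (hF : Summable F) : HasSum (fun i => h ^ d * F i) (∫ x, F (cellIndex h x)) := by
  refine (hasSum_integral_cubicCell hh (integrable_comp_cellIndex hh hF)).congr_fun fun i => ?_
  rw [setIntegral_congr_fun (measurableSet_cubicCell h i)
    (fun x hx => by rw [(mem_cubicCell_iff hh).1 hx]), setIntegral_const,
    measureReal_cubicCell hh.le, smul_eq_mul]

end CubicCells

section CellAverages

variable {d : ℕ} {f : (Fin d → ℝ) → ℝ} {h : ℝ}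

noncomputable def cellAvg (f : (Fin d → ℝ) → ℝ) (h : ℝ) (i : Fin d → ℤ) : ℝ :=
  ⨍ x in cubicCell h i, f x

noncomputable def gridAvg (f : (Fin d → ℝ) → ℝ) (h : ℝ) (x : Fin d → ℝ) : ℝ :=
  cellAvg f h (cellIndex h x)

lemma cellAvg_eq_div (hh : 0 < h) (i : Fin d → ℤ) :
    cellAvg f h i = (∫ x in cubicCell h i, f x) / h ^ d := by
  rw [cellAvg, setAverage_eq, measureReal_cubicCell hh.le, smul_eq_mul, inv_mul_eq_div]

lemma cellAvg_nonneg (hf : ∀ x, 0 ≤ f x) (i : Fin d → ℤ) : 0 ≤ cellAvg f h i := by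
  rw [cellAvg, setAverage_eq]
  exact smul_nonneg (inv_nonneg.2 measureReal_nonneg) (setIntegral_nonneg
    (measurableSet_cubicCell h i) fun x _ => hf x)

lemma measurable_comp_gridAvg (G : ℝ → ℝ) (h : ℝ) : Measurable fun x => G (gridAvg f h x) :=
  (measurable_of_countable fun i => G (cellAvg f h i)).comp (measurable_cellIndex h)

section Jensen

variable {G : ℝ → ℝ} (hG : ConvexOn ℝ (Ici 0) G) (hGc : ContinuousOn G (Ici 0))
  (hf : ∀ x, 0 ≤ f x) (hfi : Integrable f) (hGf : Integrable fun x => G (f x))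
include hG hGc hf hfi hGf

lemma ConvexOn.pow_mul_map_cellAvg_le (hh : 0 < h) (i : Fin d → ℤ) :
    h ^ d * G (cellAvg f h i) ≤ ∫ x in cubicCell h i, G (f x) := by
  have hvol : volume (cubicCell h i) = ENNReal.ofReal h ^ d := volume_cubicCell h i
  have jensen : G (cellAvg f h i) ≤ ⨍ x in cubicCell h i, G (f x) :=
    hG.map_set_average_le hGc isClosed_Ici (by simp [hvol, hh.not_ge]) (by simp [hvol])
      (ae_of_all _ hf) hfi.integrableOn hGf.integrableOn
  rw [setAverage_eq, measureReal_cubicCell hh.le, smul_eq_mul] at jensen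
  calc h ^ d * G (cellAvg f h i) ≤ h ^ d * ((h ^ d)⁻¹ * ∫ x in cubicCell h i, G (f x)) :=
        mul_le_mul_of_nonneg_left jensen (by positivity)
    _ = ∫ x in cubicCell h i, G (f x) := mul_inv_cancel_left₀ (by positivity) _

variable (hG0 : ∀ t, 0 ≤ G t)
include hG0

lemma ConvexOn.summable_map_cellAvg (hh : 0 < h) : Summable fun i => G (cellAvg f h i) := by
  refine (summable_mul_left_iff (pow_pos hh d).ne').1 ?_
  exact .of_nonneg_of_le (fun i => mul_nonneg (by positivity) (hG0 _))
    (hG.pow_mul_map_cellAvg_le hGc hf hfi hGf hh) (hasSum_integral_cubicCell hh hGf).summable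

lemma ConvexOn.integral_map_gridAvg_le (hh : 0 < h) :
    ∫ x, G (gridAvg f h x) ≤ ∫ x, G (f x) :=
  hasSum_le (hG.pow_mul_map_cellAvg_le hGc hf hfi hGf hh)
    (hasSum_integral_comp_cellIndex hh (hG.summable_map_cellAvg hGc hf hfi hGf hG0 hh))
    (hasSum_integral_cubicCell hh hGf)

end Jensen

lemma closedBall_cellCenter (hh : 0 ≤ h) (i : Fin d → ℤ) :
    Metric.closedBall (fun j => ((i j : ℝ) + 1 / 2) * h) (h / 2) =
      pi univ fun j => Icc ((i j : ℝ) * h) ((i j + 1) * h) := by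
  rw [closedBall_pi _ (by positivity)]
  congr! 2 with j
  rw [Real.closedBall_eq_Icc]
  ring_nf

/-- `Fin d → ℝ` carries the sup norm, so up to a null set every cell is a closed ball, and the
Lebesgue differentiation theorem for doubling measures applies. -/
lemma ae_tendsto_gridAvg (hf : LocallyIntegrable f) :
    ∀ᵐ x, Tendsto (fun h => gridAvg f h x) (𝓝[>] 0) (𝓝 (f x)) := by
  filter_upwards [IsUnifLocDoublingMeasure.ae_tendsto_average volume hf 1] with x hx
  have hδ : Tendsto (fun h : ℝ => h / 2) (𝓝[>] 0) (𝓝[>] 0) :=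
    tendsto_nhdsWithin_iff.2 ⟨by simpa using (tendsto_nhdsWithin_of_tendsto_nhds
      (tendsto_id (x := 𝓝 (0 : ℝ)))).div_const 2,
      eventually_nhdsWithin_of_forall fun h (hh : 0 < h) => half_pos hh⟩
  refine (hx (fun h j => ((cellIndex h x j : ℝ) + 1 / 2) * h) _ hδ ?_).congr' ?_
  · filter_upwards [self_mem_nhdsWithin] with h (hh : 0 < h)
    rw [one_mul, closedBall_cellCenter hh.le]
    have hx := mem_cubicCell_cellIndex hh x
    rw [cubicCell_eq_pi] at hx
    exact pi_mono (fun j _ => Ico_subset_Icc_self) hx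
  · filter_upwards [self_mem_nhdsWithin] with h (hh : 0 < h)
    rw [closedBall_cellCenter hh.le, gridAvg, cellAvg, cubicCell_eq_pi]
    exact setAverage_congr Measure.pi_Ico_ae_eq_pi_Icc.symm

end CellAverages

section RenyiMajorant

variable {d : ℕ} {f : (Fin d → ℝ) → ℝ} {h : ℝ}

noncomputable def anchor (h : ℝ) (i : Fin d → ℤ) : Fin d → ℤ :=
  fun j => ⌊(i j : ℝ) * h⌋

def cornerOffsets (d : ℕ) : Finset (Fin d → ℤ) := Fintype.piFinset fun _ => {0, 1}

def doubleCell (k : Fin d → ℤ) : Set (Fin d → ℝ) :=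
  ⋃ σ ∈ cornerOffsets d, cubicCell 1 (k + σ)

lemma cubicCell_subset_doubleCell (hh1 : h ≤ 1) (i : Fin d → ℤ) :
    cubicCell h i ⊆ doubleCell (anchor h i) := by
  intro x hx
  refine mem_biUnion (x := cellIndex 1 x - anchor h i) ?_ ?_
  · simp only [Finset.mem_coe, cornerOffsets, Fintype.mem_piFinset, Finset.mem_insert,
      Finset.mem_singleton, cellIndex, div_one, Pi.sub_apply, anchor]
    intro j
    obtain ⟨hlo, hhi⟩ := hx j
    have hk_le : ⌊(i j : ℝ) * h⌋ ≤ ⌊x j⌋ := Int.floor_le_floor hlo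
    have hlt_k : ⌊x j⌋ < ⌊(i j : ℝ) * h⌋ + 2 := by
      rw [← Int.cast_lt (R := ℝ)]
      push_cast
      linarith [Int.floor_le (x j), Int.lt_floor_add_one ((i j : ℝ) * h)]
    omega
  · rw [add_sub_cancel, mem_cubicCell_iff one_pos]

lemma measurableSet_doubleCell (k : Fin d → ℤ) : MeasurableSet (doubleCell k) :=
  .biUnion (Finset.countable_toSet _) fun _ _ => measurableSet_cubicCell 1 _

lemma volume_doubleCell_le (k : Fin d → ℤ) : volume (doubleCell k) ≤ 2 ^ d := by
  refine (measure_biUnion_finset_le _ _).trans_eq ?_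
  simp [volume_cubicCell, cornerOffsets, Fintype.card_piFinset]

lemma integral_doubleCell (hfi : Integrable f) (k : Fin d → ℤ) :
    ∫ x in doubleCell k, f x = ∑ σ ∈ cornerOffsets d, ∫ x in cubicCell 1 (k + σ), f x :=
  integral_biUnion_finset _ (fun _ _ => measurableSet_cubicCell 1 _)
    (fun _ _ _ _ hστ => pairwise_disjoint_cubicCell one_pos ((add_right_injective k).ne hστ))
    fun _ _ => hfi.integrableOn

lemma card_mul_pow_le_two_pow (hh : 0 < h) (hh1 : h ≤ 1) {k : Fin d → ℤ}
    (s : Finset (Fin d → ℤ)) (hs : ∀ i ∈ s, anchor h i = k) : s.card * h ^ d ≤ 2 ^ d := by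
  have hsub : (⋃ i ∈ s, cubicCell h i) ⊆ doubleCell k :=
    iUnion₂_subset fun i hi => hs i hi ▸ cubicCell_subset_doubleCell hh1 i
  have hvol := (measure_mono (μ := volume) hsub).trans (volume_doubleCell_le k)
  rw [measure_biUnion_finset (fun i _ j _ hij => pairwise_disjoint_cubicCell hh hij)
    (fun i _ => measurableSet_cubicCell h i)] at hvol
  simp only [volume_cubicCell, Finset.sum_const, nsmul_eq_mul] at hvol
  rw [← ENNReal.ofReal_pow hh.le, ← ENNReal.ofReal_natCast,
    ← ENNReal.ofReal_mul (by positivity)] at hvol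
  simpa using (ENNReal.ofReal_le_iff_le_toReal (by simp)).1 hvol

/-- The constant is the one of `Real.sum_mul_posPart_negMulLog_div_le` for `M = 2 ^ d`, which
bounds the volume of `doubleCell k`. -/
noncomputable def renyiMajorant (f : (Fin d → ℝ) → ℝ) (k : Fin d → ℤ) : ℝ :=
  negMulLog (∫ x in doubleCell k, f x) +
    (log (2 ^ d) + exp 1 * 2 ^ d) * ∫ x in doubleCell k, f x

variable (hf : ∀ x, 0 ≤ f x) (hfi : Integrable f) (hf1 : ∫ x, f x = 1)
include hf hfi hf1

lemma sum_le_renyiMajorant (hh : 0 < h) (hh1 : h ≤ 1) {k : Fin d → ℤ}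
    (s : Finset (Fin d → ℤ)) (hs : ∀ i ∈ s, anchor h i = k) :
    ∑ i ∈ s, h ^ d * (negMulLog (cellAvg f h i))⁺ ≤ renyiMajorant f k := by
  simp only [cellAvg_eq_div hh]
  refine sum_mul_posPart_negMulLog_div_le s (by positivity)
    (fun i _ => setIntegral_nonneg (measurableSet_cubicCell h i) fun x _ => hf x) ?_
    (hf1 ▸ setIntegral_le_integral hfi (ae_of_all _ hf)) (one_le_pow₀ one_le_two)
    (card_mul_pow_le_two_pow hh hh1 s hs)
  rw [← integral_biUnion_finset s (fun i _ => measurableSet_cubicCell h i)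
    (fun i _ j _ hij => pairwise_disjoint_cubicCell hh hij) fun i _ => hfi.integrableOn]
  exact setIntegral_mono_set hfi.integrableOn (ae_of_all _ hf) (Eventually.of_forall
    (iUnion₂_subset fun i hi => hs i hi ▸ cubicCell_subset_doubleCell hh1 i))

lemma renyiMajorant_nonneg (k : Fin d → ℤ) : 0 ≤ renyiMajorant f k := by
  have hQ0 : 0 ≤ ∫ x in doubleCell k, f x := setIntegral_nonneg (measurableSet_doubleCell k)
    fun x _ => hf x
  have hQ1 : ∫ x in doubleCell k, f x ≤ 1 :=
    hf1 ▸ setIntegral_le_integral hfi (ae_of_all _ hf)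
  have hc : 0 ≤ log (2 ^ d) + exp 1 * 2 ^ d := by
    have hlog := log_nonneg (one_le_pow₀ (one_le_two (α := ℝ)) (n := d))
    positivity
  exact add_nonneg (negMulLog_nonneg hQ0 hQ1) (mul_nonneg hc hQ0)

lemma summable_renyiMajorant
    (hq : Summable fun k : Fin d → ℤ => negMulLog (∫ x in cubicCell 1 k, f x)) :
    Summable (renyiMajorant f) := by
  have hq' := (hasSum_integral_cubicCell one_pos hfi).summable
  refine .of_nonneg_of_le (renyiMajorant_nonneg hf hfi hf1) (fun k => ?_)
    (summable_sum (s := cornerOffsets d) fun σ _ => ((Equiv.addRight σ).summable_iff.2 hq).add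
      (((Equiv.addRight σ).summable_iff.2 hq').mul_left (log (2 ^ d) + exp 1 * 2 ^ d)))
  simp only [renyiMajorant, integral_doubleCell hfi, Finset.mul_sum, Finset.sum_add_distrib,
    Function.comp_apply, Equiv.coe_addRight]
  gcongr
  exact negMulLog_sum_le _ fun σ _ => setIntegral_nonneg (measurableSet_cubicCell 1 _)
    fun x _ => hf x

lemma sum_le_tsum_renyiMajorant (hh : 0 < h) (hh1 : h ≤ 1) (hR : Summable (renyiMajorant f))
    (S s : Finset (Fin d → ℤ)) (hs : ∀ i ∈ s, anchor h i ∉ S) :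
    ∑ i ∈ s, h ^ d * (negMulLog (cellAvg f h i))⁺ ≤
      ∑' k : {k // k ∉ S}, renyiMajorant f k := by
  rw [← Finset.sum_fiberwise_of_maps_to fun i hi => Finset.mem_image_of_mem (anchor h) hi]
  calc _ ≤ ∑ k ∈ s.image (anchor h), renyiMajorant f k :=
        Finset.sum_le_sum fun k _ => sum_le_renyiMajorant hf hfi hf1 hh hh1 _
          fun i hi => (Finset.mem_filter.1 hi).2
    _ = ∑ k ∈ (s.image (anchor h)).subtype (· ∉ S), renyiMajorant f k :=
        (Finset.sum_subtype_of_mem _ fun k hk => by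
          obtain ⟨i, hi, rfl⟩ := Finset.mem_image.1 hk
          exact hs i hi).symm
    _ ≤ _ := Summable.sum_le_tsum _ (fun k _ => renyiMajorant_nonneg hf hfi hf1 k)
        (hR.subtype _)

end RenyiMajorant

section NegativePart

variable {d : ℕ} {f : (Fin d → ℝ) → ℝ}
  (hf : ∀ x, 0 ≤ f x) (hfi : Integrable f) (hgi : Integrable fun x => negMulLog (f x))
include hf hfi hgi

lemma tendsto_integral_negPart_negMulLog_gridAvg :
    Tendsto (fun h => ∫ x, (negMulLog (gridAvg f h x))⁻) (𝓝[>] 0)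
      (𝓝 (∫ x, (negMulLog (f x))⁻)) := by
  have hG := convexOn_negPart_negMulLog
  have hGc : Continuous fun t => (negMulLog t)⁻ := continuous_negPart.comp continuous_negMulLog
  have hGf : Integrable fun x => (negMulLog (f x))⁻ := hgi.neg_part
  refine tendsto_integral_of_ae_tendsto_of_eventually_integral_le (fun _ _ => negPart_nonneg _)
    (fun h => (measurable_comp_gridAvg (fun t => (negMulLog t)⁻) h).aemeasurable) ?_ hGf ?_
    fun ε hε => ?_
  · filter_upwards [self_mem_nhdsWithin] with h (hh : 0 < h)
    exact integrable_comp_cellIndex hh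
      (hG.summable_map_cellAvg hGc.continuousOn hf hfi hGf (fun _ => negPart_nonneg _) hh)
  · filter_upwards [ae_tendsto_gridAvg hfi.locallyIntegrable] with x hx
    exact (hGc.tendsto _).comp hx
  · filter_upwards [self_mem_nhdsWithin] with h (hh : 0 < h)
    linarith [hG.integral_map_gridAvg_le hGc.continuousOn hf hfi hGf
      (fun _ => negPart_nonneg _) hh]

end NegativePart

section DominatedConvergence

variable {d : ℕ} {f : (Fin d → ℝ) → ℝ}

lemma ae_tendsto_posPart_negMulLog_gridAvg (hfi : Integrable f) :
    ∀ᵐ x, Tendsto (fun h => (negMulLog (gridAvg f h x))⁺) (𝓝[>] 0)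
      (𝓝 (negMulLog (f x))⁺) := by
  filter_upwards [ae_tendsto_gridAvg hfi.locallyIntegrable] with x hx
  exact ((continuous_posPart.comp continuous_negMulLog).tendsto _).comp hx

lemma tendsto_setIntegral_posPart_negMulLog_gridAvg (hf : ∀ x, 0 ≤ f x) (hfi : Integrable f)
    {B : Set (Fin d → ℝ)} (hB : volume B ≠ ∞) :
    Tendsto (fun h => ∫ x in B, (negMulLog (gridAvg f h x))⁺) (𝓝[>] 0)
      (𝓝 (∫ x in B, (negMulLog (f x))⁺)) := by
  have : IsFiniteMeasure (volume.restrict B) := isFiniteMeasure_restrict.2 hB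
  refine tendsto_integral_filter_of_dominated_convergence (fun _ => 1) (.of_forall fun h =>
    (measurable_comp_gridAvg (fun t => (negMulLog t)⁺) h).aestronglyMeasurable)
    (.of_forall fun h => ae_of_all _ fun x => ?_) (integrable_const 1)
    (ae_restrict_of_ae (ae_tendsto_posPart_negMulLog_gridAvg hfi))
  rw [Real.norm_of_nonneg (posPart_nonneg _)]
  exact posPart_negMulLog_le_one (cellAvg_nonneg hf _)

end DominatedConvergence

section PositivePart

variable {d : ℕ} {f : (Fin d → ℝ) → ℝ} {h : ℝ}
  (hf : ∀ x, 0 ≤ f x) (hfi : Integrable f) (hf1 : ∫ x, f x = 1)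
  (hR : Summable (renyiMajorant f))
include hf hfi hf1 hR

lemma summable_posPart_negMulLog_cellAvg (hh : 0 < h) (hh1 : h ≤ 1) :
    Summable fun i => (negMulLog (cellAvg f h i))⁺ := by
  refine (summable_mul_left_iff (pow_pos hh d).ne').1 (summable_of_sum_le
    (c := ∑' k : {k // k ∉ (∅ : Finset (Fin d → ℤ))}, renyiMajorant f k)
    (fun i => mul_nonneg (by positivity) (posPart_nonneg _)) fun s => ?_)
  exact sum_le_tsum_renyiMajorant hf hfi hf1 hh hh1 hR ∅ s fun _ _ => Finset.notMem_empty _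

lemma integral_posPart_negMulLog_gridAvg_le (hh : 0 < h) (hh1 : h ≤ 1)
    (S : Finset (Fin d → ℤ)) :
    ∫ x, (negMulLog (gridAvg f h x))⁺ ≤
      (∫ x in ⋃ k ∈ S, doubleCell k, (negMulLog (gridAvg f h x))⁺) +
        ∑' k : {k // k ∉ S}, renyiMajorant f k := by
  set B := ⋃ k ∈ S, doubleCell k
  set φ := fun i => (negMulLog (cellAvg f h i))⁺
  set τ := fun i => if anchor h i ∉ S then φ i else 0
  have hφ : Summable φ := summable_posPart_negMulLog_cellAvg hf hfi hf1 hR hh hh1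
  have hτ0 : ∀ i, 0 ≤ τ i := fun i => by
    dsimp only [τ]; split_ifs <;> simp [φ]
  have hτ : Summable τ := hφ.of_nonneg_of_le hτ0 fun i => by
    dsimp only [τ]; split_ifs <;> simp [φ]
  have hB : MeasurableSet B := .biUnion S.countable_toSet fun k _ => measurableSet_doubleCell k
  have hBc : ∀ x ∉ B, φ (cellIndex h x) = τ (cellIndex h x) := fun x hx => by
    refine (if_pos fun hS => hx ?_).symm
    exact mem_biUnion hS (cubicCell_subset_doubleCell hh1 _ (mem_cubicCell_cellIndex hh x))
  have htail : ∑' i, h ^ d * τ i ≤ ∑' k : {k // k ∉ S}, renyiMajorant f k := by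
    refine (hτ.mul_left _).tsum_le_of_sum_le fun s => ?_
    simp only [τ, mul_ite, mul_zero, ← Finset.sum_filter]
    exact sum_le_tsum_renyiMajorant hf hfi hf1 hh hh1 hR S _ fun i hi =>
      (Finset.mem_filter.1 hi).2
  calc ∫ x, φ (cellIndex h x)
      = (∫ x in B, φ (cellIndex h x)) + ∫ x in Bᶜ, τ (cellIndex h x) := by
        rw [← setIntegral_congr_fun hB.compl hBc, integral_add_compl hB
          (integrable_comp_cellIndex hh hφ)]
    _ ≤ (∫ x in B, φ (cellIndex h x)) + ∫ x, τ (cellIndex h x) := add_le_add le_rfl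
        (setIntegral_le_integral (integrable_comp_cellIndex hh hτ) (ae_of_all _ fun x => hτ0 _))
    _ = (∫ x in B, φ (cellIndex h x)) + ∑' i, h ^ d * τ i := by
        rw [(hasSum_integral_comp_cellIndex hh hτ).tsum_eq]
    _ ≤ _ := add_le_add le_rfl htail

lemma tendsto_integral_posPart_negMulLog_gridAvg (hgi : Integrable fun x => negMulLog (f x)) :
    Tendsto (fun h => ∫ x, (negMulLog (gridAvg f h x))⁺) (𝓝[>] 0)
      (𝓝 (∫ x, (negMulLog (f x))⁺)) := by
  have hGf : Integrable fun x => (negMulLog (f x))⁺ := hgi.pos_part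
  refine tendsto_integral_of_ae_tendsto_of_eventually_integral_le (fun _ _ => posPart_nonneg _)
    (fun h => (measurable_comp_gridAvg (fun t => (negMulLog t)⁺) h).aemeasurable) ?_ hGf
    (ae_tendsto_posPart_negMulLog_gridAvg hfi) fun ε hε => ?_
  · filter_upwards [Ioc_mem_nhdsGT one_pos] with h hh
    exact integrable_comp_cellIndex hh.1
      (summable_posPart_negMulLog_cellAvg hf hfi hf1 hR hh.1 hh.2)
  obtain ⟨S, hS⟩ := ((tendsto_order.1 (tendsto_tsum_compl_atTop_zero (renyiMajorant f))).2 _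
    (half_pos hε)).exists
  have hB : volume (⋃ k ∈ S, doubleCell k) ≠ ∞ := ((measure_biUnion_finset_le S _).trans_lt
    (ENNReal.sum_lt_top.2 fun k _ => (volume_doubleCell_le k).trans_lt (by simp))).ne
  have hBle := setIntegral_le_integral (s := ⋃ k ∈ S, doubleCell k) hGf
    (ae_of_all _ fun _ => posPart_nonneg _)
  filter_upwards [Ioc_mem_nhdsGT one_pos, (tendsto_setIntegral_posPart_negMulLog_gridAvg hf hfi
    hB).eventually (gt_mem_nhds (lt_add_of_pos_right _ (half_pos hε)))] with h hh hB_lt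
  linarith [integral_posPart_negMulLog_gridAvg_le hf hfi hf1 hR hh.1 hh.2 S]

end PositivePart

section Entropy

variable {d : ℕ} {f : (Fin d → ℝ) → ℝ} {h : ℝ}

lemma tsum_negMulLog_integral_cubicCell (hfi : Integrable f) (hf1 : ∫ x, f x = 1) (hh : 0 < h)
    (hs : Summable fun i => negMulLog (cellAvg f h i)) :
    ∑' i, negMulLog (∫ x in cubicCell h i, f x) + d * log h =
      ∫ x, negMulLog (gridAvg f h x) := by
  have hp : HasSum (fun i => ∫ x in cubicCell h i, f x) 1 :=
    hf1 ▸ hasSum_integral_cubicCell hh hfi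
  have key : ∀ i, negMulLog (∫ x in cubicCell h i, f x) =
      h ^ d * negMulLog (cellAvg f h i) - d * log h * ∫ x in cubicCell h i, f x := fun i => by
    rw [cellAvg_eq_div hh, mul_negMulLog_div _ (pow_ne_zero _ hh.ne'), log_pow]
    ring
  rw [tsum_congr key, ((hasSum_integral_comp_cellIndex hh hs).sub (hp.mul_left _)).tsum_eq,
    mul_one, sub_add_cancel]
  rfl

variable (hf : ∀ x, 0 ≤ f x) (hfi : Integrable f) (hf1 : ∫ x, f x = 1)
  (hgi : Integrable fun x => negMulLog (f x)) (hR : Summable (renyiMajorant f))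
include hf hfi hf1 hgi hR

lemma summable_negMulLog_cellAvg (hh : 0 < h) (hh1 : h ≤ 1) :
    Summable fun i => negMulLog (cellAvg f h i) := by
  have hm := convexOn_negPart_negMulLog.summable_map_cellAvg
    (continuous_negPart.comp continuous_negMulLog).continuousOn hf hfi hgi.neg_part
    (fun _ => negPart_nonneg _) hh
  simpa only [posPart_sub_negPart] using
    (summable_posPart_negMulLog_cellAvg hf hfi hf1 hR hh hh1).sub hm

theorem tendsto_integral_negMulLog_gridAvg :
    Tendsto (fun h => ∫ x, negMulLog (gridAvg f h x)) (𝓝[>] 0)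
      (𝓝 (∫ x, negMulLog (f x))) := by
  rw [integral_eq_integral_posPart_sub_integral_negPart hgi]
  refine ((tendsto_integral_posPart_negMulLog_gridAvg hf hfi hf1 hR hgi).sub
    (tendsto_integral_negPart_negMulLog_gridAvg hf hfi hgi)).congr' ?_
  filter_upwards [Ioc_mem_nhdsGT one_pos] with h hh
  exact (integral_eq_integral_posPart_sub_integral_negPart (integrable_comp_cellIndex hh.1
    (summable_negMulLog_cellAvg hf hfi hf1 hgi hR hh.1 hh.2))).symm

end Entropy

theorem tendsto_tsum_negMulLog_integral_cubicCell_add_log {d : ℕ} {f : (Fin d → ℝ) → ℝ}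
    (hf : ∀ x, 0 ≤ f x) (hfi : Integrable f) (hf1 : ∫ x, f x = 1)
    (hgi : Integrable fun x => negMulLog (f x))
    (hq : Summable fun k => negMulLog (∫ x in cubicCell 1 k, f x)) :
    Tendsto (fun h => ∑' i, negMulLog (∫ x in cubicCell h i, f x) + d * log h) (𝓝[>] 0)
      (𝓝 (∫ x, negMulLog (f x))) := by
  have hR := summable_renyiMajorant hf hfi hf1 hq
  refine (tendsto_integral_negMulLog_gridAvg hf hfi hf1 hgi hR).congr' ?_
  filter_upwards [Ioc_mem_nhdsGT one_pos] with h hh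
  exact (tsum_negMulLog_integral_cubicCell hfi hf1 hh.1
    (summable_negMulLog_cellAvg hf hfi hf1 hgi hR hh.1 hh.2)).symm

/-- Csiszár: if `X` is an `ℝ^d`-valued random vector with density `f`
satisfying Rényi's condition (the floor vector `(⌊X_1⌋,…,⌊X_d⌋)` — i.e. the unit cubic
partition — has finite Shannon entropy) and `f·log₂(1/f)` is Lebesgue integrable, then
`𝔈_{𝒜*_h}(X) − d·log₂(1/h) → 𝔈(f)` as `h → 0⁺`. -/
theorem csiszar_cubic_partition_entropy_limit
    {Ω : Type} [MeasurableSpace Ω] (μ : Measure Ω) [IsProbabilityMeasure μ]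
    {d : ℕ} (X : Ω → (Fin d → ℝ)) (hX : Measurable X)
    (f : (Fin d → ℝ) → ℝ) (hf_meas : Measurable f) (hf_nonneg : ∀ x, 0 ≤ f x)
    (hdensity : Measure.map X μ = volume.withDensity fun x => ENNReal.ofReal (f x))
    (hrenyi : Summable fun i : Fin d → ℤ => entTerm (μ (X ⁻¹' cubicCell 1 i)).toReal)
    (hint : Integrable (fun x => f x * Real.logb 2 (1 / f x)) volume) :
    Filter.Tendsto
      (fun h : ℝ =>
        (∑' i : Fin d → ℤ, entTerm (μ (X ⁻¹' cubicCell h i)).toReal)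
          - d * Real.logb 2 (1 / h))
      (nhdsWithin 0 (Set.Ioi 0))
      (nhds (∫ x, f x * Real.logb 2 (1 / f x))) := by
  have hmass : ∀ A, MeasurableSet A → (μ (X ⁻¹' A)).toReal = ∫ x in A, f x := fun A =>
    toReal_measure_preimage_eq_setIntegral hX hf_meas.aestronglyMeasurable hf_nonneg hdensity
  have hf1 : ∫ x, f x = 1 := by simpa using (hmass univ .univ).symm
  have hfi : Integrable f := by
    by_contra hfi
    simp [integral_undef hfi] at hf1
  have hl2 : log 2 ≠ 0 := (log_pos one_lt_two).ne'
  have hgi : Integrable fun x => negMulLog (f x) := by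
    have hent : Integrable fun x => entTerm (f x) := hint
    simpa [entTerm_eq_negMulLog_div, div_mul_cancel₀ _ hl2] using hent.mul_const (log 2)
  have hq : Summable fun k => negMulLog (∫ x in cubicCell 1 k, f x) := by
    simpa [hmass _ (measurableSet_cubicCell 1 _), entTerm_eq_negMulLog_div,
      summable_div_const_iff hl2] using hrenyi
  have hlim := (tendsto_tsum_negMulLog_integral_cubicCell_add_log hf_nonneg hfi hf1 hgi
    hq).div_const (log 2)
  have htarget : ∫ x, f x * logb 2 (1 / f x) = (∫ x, negMulLog (f x)) / log 2 := by
    rw [← integral_div]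
    exact integral_congr_ae (ae_of_all _ fun x => entTerm_eq_negMulLog_div (f x))
  rw [htarget]
  refine hlim.congr fun h => ?_
  simp only [hmass _ (measurableSet_cubicCell h _), entTerm_eq_negMulLog_div, tsum_div_const,
    logb, one_div, log_inv]
  ring
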